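/- arXiv:math/0303128 — 2 statements merged into one kernel-verified Lean document; each statement's English description precedes it below -/
import Mathlib

section
/- Let h solve the Loewner-type ODE ∂_t h_t(z) = 2h_t'(w_t)²/(h_t(z) − h_t(w_t)) − 2h_t'(z)/(z − w_t), with w_t a C¹ real driving function. Then the limit as z → w_t of the right-hand side equals −3h_t''(w_t), i.e., [∂_t h_t](w_t) = −3h_t''(w_t). -/
/-!
Write `h z - h w = (z - w) g z` with `g = dslope h w`, which is analytic with `g w = h' w`.
Differentiating gives `h' = g + (z - w) g'`, hence `h'' w = 2 g' w`. The expression whose limit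
is taken is then the difference quotient at `w` of `F z = 2 h'(w)² / g z - 2 h' z`, which vanishes
at `w`, so the limit is `F' w = -2 g' w - 2 h'' w = -3 h'' w`.
-/

open Topology

section DSlope

variable {𝕜 E : Type*} [NontriviallyNormedField 𝕜] [NormedAddCommGroup E] [NormedSpace 𝕜 E]
  {f : 𝕜 → E} {w : 𝕜}

theorem AnalyticAt.analyticAt_dslope (hf : AnalyticAt 𝕜 f w) : AnalyticAt 𝕜 (dslope f w) w :=
  let ⟨_, hp⟩ := hf
  hp.has_fpower_series_dslope_fslope.analyticAt

theorem AnalyticAt.deriv_eventuallyEq_dslope_add_sub_smul [CompleteSpace E]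
    (hf : AnalyticAt 𝕜 f w) :
    deriv f =ᶠ[𝓝 w] fun z => dslope f w z + (z - w) • deriv (dslope f w) z := by
  have hfac : (fun z => f w + (z - w) • dslope f w z) = f := by
    funext z
    rw [sub_smul_dslope, add_sub_cancel]
  filter_upwards [hf.analyticAt_dslope.eventually_analyticAt] with z hz
  have hderiv : HasDerivAt (fun z => f w + (z - w) • dslope f w z)
      ((z - w) • deriv (dslope f w) z + (1 : 𝕜) • dslope f w z) z :=
    (((hasDerivAt_id z).sub_const w).smul hz.differentiableAt.hasDerivAt).const_add (f w)
  rw [hfac, one_smul, add_comm] at hderiv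
  exact hderiv.deriv

theorem AnalyticAt.deriv_deriv_eq_two_smul_deriv_dslope [CompleteSpace E]
    (hf : AnalyticAt 𝕜 f w) :
    deriv (deriv f) w = (2 : 𝕜) • deriv (dslope f w) w := by
  have hg := hf.analyticAt_dslope
  have hderiv : HasDerivAt (fun z => dslope f w z + (z - w) • deriv (dslope f w) z)
      (deriv (dslope f w) w + ((w - w) • deriv (deriv (dslope f w)) w
        + (1 : 𝕜) • deriv (dslope f w) w)) w :=
    hg.differentiableAt.hasDerivAt.add
      (((hasDerivAt_id w).sub_const w).smul hg.deriv.differentiableAt.hasDerivAt)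
  rw [hf.deriv_eventuallyEq_dslope_add_sub_smul.deriv_eq, hderiv.deriv, sub_self,
    zero_smul, zero_add, one_smul, two_smul]

end DSlope

section Loewner

variable {𝕜 : Type*} [NontriviallyNormedField 𝕜] {f : 𝕜 → 𝕜} {w : 𝕜}

/-- `(z - w)` times the right-hand side of the Loewner equation, with `f z - f w` divided by
`z - w` in advance so that it extends across `z = w`. -/
noncomputable def loewnerNumerator (f : 𝕜 → 𝕜) (w z : 𝕜) : 𝕜 :=
  2 * deriv f w ^ 2 / dslope f w z - 2 * deriv f z

theorem loewnerNumerator_self (f : 𝕜 → 𝕜) (w : 𝕜) : loewnerNumerator f w w = 0 := by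
  rw [loewnerNumerator, dslope_same]
  rcases eq_or_ne (deriv f w) 0 with h | h
  · simp [h]
  · field_simp
    ring

/-- With `x / 0 = 0` this holds at every `z`, including `z = w` and zeros of `f z - f w`. -/
theorem slope_loewnerNumerator (f : 𝕜 → 𝕜) (w z : 𝕜) :
    slope (loewnerNumerator f w) w z =
      2 * deriv f w ^ 2 / (f z - f w) - 2 * deriv f z / (z - w) := by
  rw [slope_def_field, loewnerNumerator_self, sub_zero, loewnerNumerator, ← sub_smul_dslope,
    smul_eq_mul, sub_div, div_div, mul_comm (z - w)]

theorem AnalyticAt.hasDerivAt_loewnerNumerator [CompleteSpace 𝕜] (hf : AnalyticAt 𝕜 f w)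
    (hne : deriv f w ≠ 0) :
    HasDerivAt (loewnerNumerator f w) (-3 * deriv (deriv f) w) w := by
  have hg : dslope f w w ≠ 0 := by rwa [dslope_same]
  have hderiv := ((hasDerivAt_const w (2 * deriv f w ^ 2)).fun_div
    hf.analyticAt_dslope.differentiableAt.hasDerivAt hg).fun_sub
    (hf.deriv.differentiableAt.hasDerivAt.const_mul 2)
  refine hderiv.congr_deriv ?_
  rw [hf.deriv_deriv_eq_two_smul_deriv_dslope, smul_eq_mul, dslope_same]
  field_simp
  ring

end Loewner

theorem loewner_boundary_limit (h : ℝ → ℝ) (w : ℝ)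
    (hh : AnalyticAt ℝ h w) (hne : deriv h w ≠ 0) :
    Filter.Tendsto
      (fun z => 2 * (deriv h w) ^ 2 / (h z - h w) - 2 * deriv h z / (z - w))
      (nhdsWithin w {w}ᶜ) (nhds (-3 * deriv (deriv h) w)) :=
  (hasDerivAt_iff_tendsto_slope.mp (hh.hasDerivAt_loewnerNumerator hne)).congr
    (slope_loewnerNumerator h w)
end

section
/- Let h be real-analytic near a real point w with h'(w) ≠ 0. Then lim_{z→w} [−2h'(w)²h'(z)/(h(z)−h(w))² + 2h'(z)/(z−w)² − 2h''(z)/(z−w)] = h''(w)²/(2h'(w)) − (4/3)h'''(w). -/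
/-!
Write `h z - h w = (z - w) g z` and `g z - h'(w) = (z - w) k z`, with `g = dslope h w` and
`k = dslope g w` analytic at `w`. Then `1 - h'(w)² / g² = (z - w) k (g + h'(w)) / g²`, so the
expression equals `P z / (z - w)` with `P = 2 h' k (g + h'(w)) / g² - 2 h''` analytic at `w`.
Since `g(w) = h'(w)` and `k(w) = h''(w) / 2`, `P` vanishes at `w`, and the limit is `P'(w)`,
computed from `g'(w) = h''(w) / 2` and `k'(w) = h'''(w) / 6`.
-/

open Filter Topology Function Nat

section

variable {𝕜 : Type*} [NontriviallyNormedField 𝕜]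

theorem tendsto_div_sub_of_hasDerivAt {f : 𝕜 → 𝕜} {f' x : 𝕜} (hf : HasDerivAt f f' x)
    (hx : f x = 0) : Tendsto (fun z => f z / (z - x)) (𝓝[≠] x) (𝓝 f') :=
  (hasDerivAt_iff_tendsto_slope.mp hf).congr fun z => by rw [slope_def_field, hx, sub_zero]

variable [CompleteSpace 𝕜] [CharZero 𝕜] {f : 𝕜 → 𝕜} {x : 𝕜}

theorem AnalyticAt.iterate_dslope_apply_self (hf : AnalyticAt 𝕜 f x) (n : ℕ) :
    (swap dslope x)^[n] f x = iteratedDeriv n f x / n ! := by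
  rw [← (hf.hasFPowerSeriesAt.has_fpower_series_iterate_dslope_fslope n).coeff_zero 1]
  simp

theorem AnalyticAt.hasDerivAt_iterate_dslope (hf : AnalyticAt 𝕜 f x) (n : ℕ) :
    HasDerivAt ((swap dslope x)^[n] f) (iteratedDeriv (n + 1) f x / (n + 1)!) x := by
  have := (hf.hasFPowerSeriesAt.has_fpower_series_iterate_dslope_fslope n).hasDerivAt
  change HasDerivAt _ ((FormalMultilinearSeries.fslope^[n] _).coeff 1) x at this
  simpa [FormalMultilinearSeries.coeff_iterate_fslope, add_comm 1 n] using this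

theorem AnalyticAt.dslope_dslope_self (hf : AnalyticAt 𝕜 f x) :
    dslope (dslope f x) x x = deriv (deriv f) x / 2 := by
  simpa [iteratedDeriv_succ] using hf.iterate_dslope_apply_self 2

end

namespace Loewner

variable {𝕜 : Type*} [NontriviallyNormedField 𝕜] {h : 𝕜 → 𝕜} {w : 𝕜}

noncomputable def numerator (h : 𝕜 → 𝕜) (w z : 𝕜) : 𝕜 :=
  2 * deriv h z * dslope (dslope h w) w z * (dslope h w z + deriv h w) / dslope h w z ^ 2
    - 2 * deriv (deriv h) z

theorem eventuallyEq_numerator_div (hh : DifferentiableAt 𝕜 h w) (hne : deriv h w ≠ 0) :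
    (fun z => -2 * deriv h w ^ 2 * deriv h z / (h z - h w) ^ 2 + 2 * deriv h z / (z - w) ^ 2
        - 2 * deriv (deriv h) z / (z - w)) =ᶠ[𝓝[≠] w] fun z => numerator h w z / (z - w) := by
  have hg : ∀ᶠ z in 𝓝 w, dslope h w z ≠ 0 :=
    (continuousAt_dslope_same.mpr hh).eventually_ne (by rwa [dslope_same])
  filter_upwards [nhdsWithin_le_nhds hg, self_mem_nhdsWithin] with z hgz hzw
  have hzw : z - w ≠ 0 := sub_ne_zero.mpr hzw
  have h_sub : h z - h w = (z - w) * dslope h w z := (sub_smul_dslope h w z).symm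
  have g_sub : dslope h w z - deriv h w = (z - w) * dslope (dslope h w) w z := by
    rw [← dslope_same, ← smul_eq_mul, sub_smul_dslope]
  have hk : dslope (dslope h w) w z = (dslope h w z - deriv h w) / (z - w) := by
    rw [g_sub, mul_div_cancel_left₀ _ hzw]
  rw [numerator, h_sub, hk]
  field_simp
  ring

variable [CompleteSpace 𝕜] [CharZero 𝕜]

theorem numerator_self (hh : AnalyticAt 𝕜 h w) (hne : deriv h w ≠ 0) :
    numerator h w w = 0 := by
  rw [numerator, hh.dslope_dslope_self, dslope_same]
  field_simp
  ring

theorem hasDerivAt_numerator (hh : AnalyticAt 𝕜 h w) (hne : deriv h w ≠ 0) :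
    HasDerivAt (numerator h w)
      (deriv (deriv h) w ^ 2 / (2 * deriv h w) - 4 / 3 * deriv (deriv (deriv h)) w) w := by
  have H1 : HasDerivAt (deriv h) (deriv (deriv h) w) w := hh.deriv.differentiableAt.hasDerivAt
  have H2 : HasDerivAt (deriv (deriv h)) (deriv (deriv (deriv h)) w) w :=
    hh.deriv.deriv.differentiableAt.hasDerivAt
  have G : HasDerivAt (dslope h w) (deriv (deriv h) w / 2) w := by
    simpa [iteratedDeriv_succ] using hh.hasDerivAt_iterate_dslope 1
  have K : HasDerivAt (dslope (dslope h w) w) (deriv (deriv (deriv h)) w / 6) w := by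
    simpa [iteratedDeriv_succ, factorial] using hh.hasDerivAt_iterate_dslope 2
  have hg : dslope h w w ^ 2 ≠ 0 := by rw [dslope_same]; exact pow_ne_zero 2 hne
  refine (((((H1.const_mul 2).mul K).mul (G.add_const _)).div (G.pow 2) hg).sub
    (H2.const_mul 2)).congr_deriv ?_
  simp only [Pi.mul_apply, Pi.pow_apply]
  rw [hh.dslope_dslope_self, dslope_same]
  field_simp
  ring

end Loewner

theorem loewner_boundary_deriv_limit (h : ℝ → ℝ) (w : ℝ)
    (hh : AnalyticAt ℝ h w) (hne : deriv h w ≠ 0) :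
    Filter.Tendsto
      (fun z => -2 * (deriv h w) ^ 2 * deriv h z / (h z - h w) ^ 2
        + 2 * deriv h z / (z - w) ^ 2 - 2 * deriv (deriv h) z / (z - w))
      (nhdsWithin w {w}ᶜ)
      (nhds ((deriv (deriv h) w) ^ 2 / (2 * deriv h w)
        - 4 / 3 * deriv (deriv (deriv h)) w)) :=
  (tendsto_div_sub_of_hasDerivAt (Loewner.hasDerivAt_numerator hh hne)
    (Loewner.numerator_self hh hne)).congr'
    (Loewner.eventuallyEq_numerator_div hh.differentiableAt hne).symm
end
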